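/- arXiv:math/0503049 — 2 statements merged into one kernel-verified Lean document; each statement's English description precedes it below -/
import Mathlib

section
/- Let B be a closed smooth 2-form on ℝ^N and, for q₀,x,y ∈ ℝ^N, let Γ_B(⟨q₀,x,y⟩) denote the integral of B over the (affine) triangle with vertices q₀, x, y. Then for ℏ ≠ 0 the phase function ω_B^ℏ(q;x,y) := exp(−(i/ℏ) Γ_B(⟨q, q+ℏx, q+ℏx+ℏy⟩)) satisfies the 2-cocycle identity ω_B^ℏ(q;x,y) ω_B^ℏ(q;x+y,z) = ω_B^ℏ(q+ℏx;y,z) ω_B^ℏ(q;x,y+z) for all q,x,y,z ∈ ℝ^N. -/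
open scoped BigOperators
open MeasureTheory

/-- Flux of the 2-form `B` through the affine triangle with vertices `a`, `b`, `c`,
computed via the parametrization `T(s,t) = a + s(b-a) + t(c-b)`, `0 ≤ t ≤ s ≤ 1`. -/
noncomputable def fluxB {N : ℕ} (B : Fin N → Fin N → (Fin N → ℝ) → ℝ)
    (a b c : Fin N → ℝ) : ℝ :=
  ∫ s in (0:ℝ)..1, ∫ t in (0:ℝ)..s,
    ∑ j, ∑ k, B j k (a + s • (b - a) + t • (c - b)) * (b - a) j * (c - b) k

/-- The magnetic phase `ω_B^ℏ(q;x,y) = exp(-(i/ℏ) Γ_B⟨q, q+ℏx, q+ℏx+ℏy⟩)`. -/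
noncomputable def omegaB {N : ℕ} (B : Fin N → Fin N → (Fin N → ℝ) → ℝ) (ℏ : ℝ)
    (q x y : Fin N → ℝ) : ℂ :=
  Complex.exp (-(Complex.I / (ℏ : ℂ)) * (fluxB B q (q + ℏ • x) (q + ℏ • x + ℏ • y) : ℝ))

set_option linter.unusedSectionVars false

namespace MagAux

variable {N : ℕ} (B : Fin N → Fin N → (Fin N → ℝ) → ℝ)

/-- Poincaré primitive: `A_k(p) = ∫_0^1 t ∑_j B_{jk}(tp) p_j dt`. -/
noncomputable def Aform (k : Fin N) (p : Fin N → ℝ) : ℝ :=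
  ∫ t in (0:ℝ)..1, t * ∑ j, B j k (t • p) * p j

/-- Pointwise (in `t`) derivative of the integrand of `Aform` with respect to `p`. -/
noncomputable def Fp (k : Fin N) (p : Fin N → ℝ) (t : ℝ) : (Fin N → ℝ) →L[ℝ] ℝ :=
  ∑ j, ((t ^ 2 * p j) • fderiv ℝ (B j k) (t • p)
    + (t * B j k (t • p)) • ContinuousLinearMap.proj j)

/-- Derivative of `Aform`. -/
noncomputable def Dform (k : Fin N) (p : Fin N → ℝ) : (Fin N → ℝ) →L[ℝ] ℝ :=
  ∫ t in (0:ℝ)..1, Fp B k p t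

/-- Line integral of the 1-form `A` along the segment from `a` to `b`. -/
noncomputable def Lint (a b : Fin N → ℝ) : ℝ :=
  ∫ s in (0:ℝ)..1, ∑ k, Aform B k (a + s • (b - a)) * (b - a) k

variable (hB : ∀ j k, ContDiff ℝ (⊤ : ℕ∞) (B j k))

section basic
include hB

lemma contB (j k : Fin N) : Continuous (B j k) := (hB j k).continuous

lemma contFderivB (j k : Fin N) : Continuous (fderiv ℝ (B j k)) :=
  (hB j k).continuous_fderiv (by simp)

lemma continuous_Fp (k : Fin N) :
    Continuous (fun q : (Fin N → ℝ) × ℝ => Fp B k q.1 q.2) := by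
  unfold Fp
  refine continuous_finset_sum _ fun j _ => ?_
  have hs : Continuous fun q : (Fin N → ℝ) × ℝ => q.2 • q.1 :=
    continuous_snd.smul continuous_fst
  exact ((continuous_snd.pow 2).mul ((continuous_apply j).comp continuous_fst)).smul
      ((contFderivB B hB j k).comp hs) |>.add
    ((continuous_snd.mul ((contB B hB j k).comp hs)).smul continuous_const)

omit hB in
lemma Fp_apply (k : Fin N) (p : Fin N → ℝ) (t : ℝ) (v : Fin N → ℝ) :
    Fp B k p t v
      = ∑ j, (t ^ 2 * p j * fderiv ℝ (B j k) (t • p) v + t * B j k (t • p) * v j) := by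
  simp [Fp, ContinuousLinearMap.sum_apply, mul_assoc]

lemma hasFDerivAt_integrand (k : Fin N) (t : ℝ) (p : Fin N → ℝ) :
    HasFDerivAt (fun p : Fin N → ℝ => t * ∑ j, B j k (t • p) * p j) (Fp B k p t) p := by
  have h1 : ∀ j : Fin N, HasFDerivAt (fun p : Fin N → ℝ => B j k (t • p))
      ((fderiv ℝ (B j k) (t • p)).comp (t • ContinuousLinearMap.id ℝ (Fin N → ℝ))) p := by
    intro j
    exact (((hB j k).differentiable (by simp) (t • p)).hasFDerivAt).comp p
      ((hasFDerivAt_id p).const_smul t)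
  have h2 := fun j : Fin N =>
    (h1 j).mul' ((ContinuousLinearMap.proj (R := ℝ) (φ := fun _ : Fin N => ℝ) j).hasFDerivAt)
  have h3 := (HasFDerivAt.fun_sum (u := Finset.univ) fun j _ => h2 j).const_mul t
  refine h3.congr_fderiv ?_
  ext v
  simp only [Fp, ContinuousLinearMap.smul_apply, ContinuousLinearMap.sum_apply,
    ContinuousLinearMap.add_apply, ContinuousLinearMap.coe_comp', Function.comp_apply,
    ContinuousLinearMap.coe_smul', Pi.smul_apply, ContinuousLinearMap.coe_id', id_eq,
    ContinuousLinearMap.proj_apply, smul_eq_mul, Finset.mul_sum,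
    ContinuousLinearMap.smulRight_apply]
  refine Finset.sum_congr rfl fun j _ => ?_
  rw [ContinuousLinearMap.map_smul, smul_eq_mul]
  simp only [op_smul_eq_mul]
  ring

lemma contF (k : Fin N) (x : Fin N → ℝ) :
    Continuous fun t : ℝ => t * ∑ j, B j k (t • x) * x j := by
  have h : Continuous fun t : ℝ => t • x := continuous_id.smul continuous_const
  exact continuous_id.mul (continuous_finset_sum _ fun j _ =>
    ((contB B hB j k).comp h).mul continuous_const)

lemma continuous_uncurry_integrand (k : Fin N) :
    Continuous (Function.uncurry fun (p : Fin N → ℝ) (t : ℝ) => t * ∑ j, B j k (t • p) * p j) := by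
  have h : Continuous fun q : (Fin N → ℝ) × ℝ => q.2 • q.1 :=
    continuous_snd.smul continuous_fst
  exact continuous_snd.mul (continuous_finset_sum _ fun j _ =>
    ((contB B hB j k).comp h).mul ((continuous_apply j).comp continuous_fst))

lemma continuous_Aform (k : Fin N) : Continuous (Aform B k) := by
  unfold Aform
  exact intervalIntegral.continuous_parametric_intervalIntegral_of_continuous'
    (continuous_uncurry_integrand B hB k) 0 1

lemma intervalIntegrable_Fp (k : Fin N) (p : Fin N → ℝ) :
    IntervalIntegrable (Fp B k p) volume 0 1 :=
  ((continuous_Fp B hB k).comp (Continuous.prodMk_right p)).intervalIntegrable 0 1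

lemma hasFDerivAt_Aform (k : Fin N) (p : Fin N → ℝ) :
    HasFDerivAt (Aform B k) (Dform B k p) p := by
  obtain ⟨C, hC⟩ := ((isCompact_closedBall p 1).prod (isCompact_Icc (a := (0:ℝ)) (b := 1))).bddAbove_image
    ((continuous_Fp B hB k).norm.continuousOn)
  have H := intervalIntegral.hasFDerivAt_integral_of_dominated_of_fderiv_le
    (𝕜 := ℝ) (μ := volume) (a := 0) (b := 1)
    (F := fun x t => t * ∑ j, B j k (t • x) * x j) (F' := fun x t => Fp B k x t)
    (x₀ := p) (bound := fun _ => C) (Metric.ball_mem_nhds p one_pos)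
    (Filter.Eventually.of_forall fun x => (contF B hB k x).aestronglyMeasurable)
    ((contF B hB k p).intervalIntegrable 0 1)
    (((continuous_Fp B hB k).comp (Continuous.prodMk_right p)).aestronglyMeasurable)
    (Filter.Eventually.of_forall fun t ht x hx => by
      refine hC ⟨(x, t), ⟨⟨Metric.ball_subset_closedBall hx, ?_⟩, rfl⟩⟩
      exact Set.Ioc_subset_Icc_self (by simpa [Set.uIoc_of_le] using ht))
    (intervalIntegrable_const)
    (Filter.Eventually.of_forall fun t _ x _ => hasFDerivAt_integrand B hB k t x)
  exact H

lemma Dform_apply (k : Fin N) (p : Fin N → ℝ) (v : Fin N → ℝ) :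
    Dform B k p v = ∫ t in (0:ℝ)..1, Fp B k p t v :=
  ContinuousLinearMap.intervalIntegral_apply (intervalIntegrable_Fp B hB k p) v

lemma continuous_Dapp (k : Fin N) (w : Fin N → ℝ) :
    Continuous fun p => Dform B k p w := by
  have h : (fun p => Dform B k p w)
      = fun p => ∫ t in (0:ℝ)..1, Fp B k p t w :=
    funext fun p => Dform_apply B hB k p w
  rw [h]
  have hc : Continuous (Function.uncurry fun (p : Fin N → ℝ) (t : ℝ) => Fp B k p t w) :=
    (continuous_Fp B hB k).clm_apply continuous_const
  exact intervalIntegral.continuous_parametric_intervalIntegral_of_continuous' hc 0 1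

lemma fderiv_anti (hBanti : ∀ j k q, B j k q = - B k j q) (j k : Fin N) (q : Fin N → ℝ) :
    fderiv ℝ (B j k) q = - fderiv ℝ (B k j) q := by
  have h : B j k = fun q => -(B k j q) := funext fun q => hBanti j k q
  rw [h, fderiv_fun_neg]

lemma curl (hBanti : ∀ j k q, B j k q = - B k j q)
    (hBclosed : ∀ j k l q,
      fderiv ℝ (B j k) q (Pi.single l 1) + fderiv ℝ (B k l) q (Pi.single j 1)
        + fderiv ℝ (B l j) q (Pi.single k 1) = 0)
    (i k : Fin N) (p : Fin N → ℝ) :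
    Dform B k p (Pi.single i 1) - Dform B i p (Pi.single k 1) = B i k p := by
  have hint : ∀ (k' : Fin N) (v : Fin N → ℝ),
      IntervalIntegrable (fun t => Fp B k' p t v) volume 0 1 :=
    fun k' v => (((continuous_Fp B hB k').comp (Continuous.prodMk_right p)).clm_apply
      continuous_const).intervalIntegrable 0 1
  rw [Dform_apply B hB, Dform_apply B hB, ← intervalIntegral.integral_sub (hint k _) (hint i _)]
  have key : ∀ t : ℝ, Fp B k p t (Pi.single i 1) - Fp B i p t (Pi.single k 1)
      = 2 * t * B i k (t • p) + t ^ 2 * (fderiv ℝ (B i k) (t • p)) p := by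
    intro t
    rw [Fp_apply, Fp_apply]
    have e1 : ∀ (k' i' : Fin N), (∑ j, (t ^ 2 * p j * fderiv ℝ (B j k') (t • p) (Pi.single i' 1)
          + t * B j k' (t • p) * (Pi.single i' 1 : Fin N → ℝ) j))
        = (∑ j, t ^ 2 * p j * fderiv ℝ (B j k') (t • p) (Pi.single i' 1))
          + t * B i' k' (t • p) := by
      intro k' i'
      rw [Finset.sum_add_distrib]
      congr 1
      simp [Pi.single_apply, mul_ite]
    rw [e1, e1]
    have e2 : ∀ j, fderiv ℝ (B j k) (t • p) (Pi.single i 1)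
        - fderiv ℝ (B j i) (t • p) (Pi.single k 1)
        = fderiv ℝ (B i k) (t • p) (Pi.single j 1) := by
      intro j
      have hc := hBclosed j k i (t • p)
      have ha1 : fderiv ℝ (B j i) (t • p) = - fderiv ℝ (B i j) (t • p) :=
        fderiv_anti B hB hBanti j i (t • p)
      have ha2 : fderiv ℝ (B k i) (t • p) = - fderiv ℝ (B i k) (t • p) :=
        fderiv_anti B hB hBanti k i (t • p)
      rw [ha1]
      rw [ha2] at hc
      simp only [ContinuousLinearMap.neg_apply] at hc ⊢
      linarith
    have e3gen : ∀ L : (Fin N → ℝ) →L[ℝ] ℝ, L p = ∑ j, p j * L (Pi.single j 1) := by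
      intro L
      conv_lhs => rw [← Finset.univ_sum_single p]
      rw [map_sum]
      refine Finset.sum_congr rfl fun j _ => ?_
      rw [show (Pi.single j (p j) : Fin N → ℝ) = p j • (Pi.single j 1 : Fin N → ℝ) by
        ext m; simp [Pi.single_apply, mul_ite, mul_one, mul_zero]]
      rw [ContinuousLinearMap.map_smul, smul_eq_mul]
    have e3 := e3gen (fderiv ℝ (B i k) (t • p))
    have e4 : B k i (t • p) = - B i k (t • p) := hBanti k i (t • p)
    have e5 : ∀ j, t ^ 2 * p j * fderiv ℝ (B j k) (t • p) (Pi.single i 1)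
        - t ^ 2 * p j * fderiv ℝ (B j i) (t • p) (Pi.single k 1)
        = t ^ 2 * (p j * fderiv ℝ (B i k) (t • p) (Pi.single j 1)) := by
      intro j
      rw [show t ^ 2 * p j * fderiv ℝ (B j k) (t • p) (Pi.single i 1)
          - t ^ 2 * p j * fderiv ℝ (B j i) (t • p) (Pi.single k 1)
          = t ^ 2 * p j * (fderiv ℝ (B j k) (t • p) (Pi.single i 1)
            - fderiv ℝ (B j i) (t • p) (Pi.single k 1)) by ring, e2 j]
      ring
    have e6 : (∑ j, t ^ 2 * p j * fderiv ℝ (B j k) (t • p) (Pi.single i 1))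
        - ∑ j, t ^ 2 * p j * fderiv ℝ (B j i) (t • p) (Pi.single k 1)
        = t ^ 2 * ∑ j, p j * fderiv ℝ (B i k) (t • p) (Pi.single j 1) := by
      rw [← Finset.sum_sub_distrib, Finset.mul_sum]
      exact Finset.sum_congr rfl fun j _ => e5 j
    rw [e3, e4]
    linarith [e6]
  rw [intervalIntegral.integral_congr (g := fun t => 2 * t * B i k (t • p)
      + t ^ 2 * (fderiv ℝ (B i k) (t • p)) p) (fun t _ => key t)]
  have hderiv : ∀ t ∈ Set.uIcc (0:ℝ) 1, HasDerivAt (fun τ : ℝ => τ ^ 2 * B i k (τ • p))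
      (2 * t * B i k (t • p) + t ^ 2 * (fderiv ℝ (B i k) (t • p)) p) t := by
    intro t _
    have hline : HasDerivAt (fun τ : ℝ => τ • p) p t := by
      simpa using (hasDerivAt_id t).smul_const p
    have hcomp : HasDerivAt (fun τ : ℝ => B i k (τ • p)) (fderiv ℝ (B i k) (t • p) p) t :=
      (((hB i k).differentiable (by simp) (t • p)).hasFDerivAt).comp_hasDerivAt t hline
    have H := (hasDerivAt_pow 2 t).fun_mul hcomp
    refine H.congr_deriv ?_
    push_cast
    ring
  have hcont : Continuous fun t : ℝ => 2 * t * B i k (t • p)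
      + t ^ 2 * (fderiv ℝ (B i k) (t • p)) p := by
    have hline : Continuous fun t : ℝ => t • p := continuous_id.smul continuous_const
    exact ((continuous_const.mul continuous_id).mul ((contB B hB i k).comp hline)).add
      ((continuous_id.pow 2).mul (((contFderivB B hB i k).comp hline).clm_apply
        continuous_const))
  rw [intervalIntegral.integral_eq_sub_of_hasDerivAt hderiv (hcont.intervalIntegrable 0 1)]
  simp

end basic

/-- Fubini swap on the triangle `0 ≤ t ≤ s ≤ 1`. -/
lemma triangle_swap (f : ℝ → ℝ → ℝ) (hf : Continuous (Function.uncurry f)) :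
    (∫ s in (0:ℝ)..1, ∫ t in (0:ℝ)..s, f s t)
      = ∫ t in (0:ℝ)..1, ∫ s in t..1, f s t := by
  classical
  set g : ℝ × ℝ → ℝ := fun q => if q.2 ≤ q.1 then f q.1 q.2 else 0 with hg
  have hset : MeasurableSet {q : ℝ × ℝ | q.2 ≤ q.1} :=
    (isClosed_le continuous_snd continuous_fst).measurableSet
  have hgmeas : StronglyMeasurable g := by
    apply StronglyMeasurable.ite hset hf.stronglyMeasurable stronglyMeasurable_const
  obtain ⟨M, hM⟩ := ((isCompact_Icc (a := (0:ℝ)) (b := 1)).prod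
    (isCompact_Icc (a := (0:ℝ)) (b := 1))).bddAbove_image hf.norm.continuousOn
  have hg_int : Integrable g
      ((volume.restrict (Set.Ioc (0:ℝ) 1)).prod (volume.restrict (Set.Ioc (0:ℝ) 1))) := by
    rw [Measure.prod_restrict]
    apply Measure.integrableOn_of_bounded (M := M)
    · rw [Measure.prod_prod]; exact ENNReal.mul_ne_top (by simp) (by simp)
    · exact hgmeas.aestronglyMeasurable
    · refine (ae_restrict_iff' (measurableSet_Ioc.prod measurableSet_Ioc)).2
        (Filter.Eventually.of_forall fun q hq => ?_)
      by_cases h : q.2 ≤ q.1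
      · simp only [hg, h, if_true]
        exact hM ⟨q, ⟨⟨Set.Ioc_subset_Icc_self hq.1, Set.Ioc_subset_Icc_self hq.2⟩, rfl⟩⟩
      · have h0 : ‖Function.uncurry f ((0:ℝ), (0:ℝ))‖ ≤ M :=
          hM ⟨((0:ℝ),(0:ℝ)), ⟨⟨Set.left_mem_Icc.2 one_pos.le, Set.left_mem_Icc.2 one_pos.le⟩, rfl⟩⟩
        simp only [hg, h, if_false]
        exact le_trans (by simp) (le_trans (norm_nonneg _) h0)
  have LHS1 : (∫ s in (0:ℝ)..1, ∫ t in (0:ℝ)..s, f s t)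
      = ∫ s in Set.Ioc (0:ℝ) 1, ∫ t in Set.Ioc (0:ℝ) 1, g (s, t) := by
    rw [intervalIntegral.integral_of_le one_pos.le]
    refine setIntegral_congr_fun measurableSet_Ioc fun s hs => ?_
    rw [intervalIntegral.integral_of_le hs.1.le]
    have : ∀ t : ℝ, g (s, t) = Set.indicator (Set.Iic s) (f s) t := fun t => by
      simp [hg, Set.indicator_apply]
    simp_rw [this]
    rw [setIntegral_indicator measurableSet_Iic, Set.Ioc_inter_Iic, min_eq_right hs.2]
  have RHS1 : (∫ t in (0:ℝ)..1, ∫ s in t..1, f s t)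
      = ∫ t in Set.Ioc (0:ℝ) 1, ∫ s in Set.Ioc (0:ℝ) 1, g (s, t) := by
    rw [intervalIntegral.integral_of_le one_pos.le]
    refine setIntegral_congr_fun measurableSet_Ioc fun t ht => ?_
    rw [intervalIntegral.integral_of_le ht.2]
    have : ∀ s : ℝ, g (s, t) = Set.indicator (Set.Ici t) (fun s => f s t) s := fun s => by
      simp [hg, Set.indicator_apply]
    simp_rw [this]
    rw [setIntegral_indicator measurableSet_Ici]
    rw [show Set.Ioc (0:ℝ) 1 ∩ Set.Ici t = Set.Icc t 1 from by
      ext x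
      simp only [Set.mem_inter_iff, Set.mem_Ioc, Set.mem_Ici, Set.mem_Icc]
      constructor
      · rintro ⟨⟨_, hx1⟩, hx2⟩; exact ⟨hx2, hx1⟩
      · rintro ⟨hx1, hx2⟩; exact ⟨⟨lt_of_lt_of_le ht.1 hx1, hx2⟩, hx1⟩]
    exact integral_Icc_eq_integral_Ioc.symm
  rw [LHS1, RHS1]
  exact MeasureTheory.integral_integral_swap (f := fun s t => g (s, t)) hg_int

lemma clm_eval_eq_sum (L : (Fin N → ℝ) →L[ℝ] ℝ) (w : Fin N → ℝ) :
    L w = ∑ j, w j * L (Pi.single j 1) := by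
  conv_lhs => rw [← Finset.univ_sum_single w]
  rw [map_sum]
  refine Finset.sum_congr rfl fun j _ => ?_
  rw [show (Pi.single j (w j) : Fin N → ℝ) = w j • (Pi.single j 1 : Fin N → ℝ) by
    ext m; simp [Pi.single_apply, mul_ite, mul_one, mul_zero]]
  rw [ContinuousLinearMap.map_smul, smul_eq_mul]

section stokes
include hB

lemma stokes (hBanti : ∀ j k q, B j k q = - B k j q)
    (hBclosed : ∀ j k l q,
      fderiv ℝ (B j k) q (Pi.single l 1) + fderiv ℝ (B k l) q (Pi.single j 1)
        + fderiv ℝ (B l j) q (Pi.single k 1) = 0)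
    (a b c : Fin N → ℝ) :
    fluxB B a b c = Lint B a b + Lint B b c - Lint B a c := by
  -- continuity helpers
  have contT : Continuous fun q : ℝ × ℝ => a + q.1 • (b - a) + q.2 • (c - b) :=
    (continuous_const.add (continuous_fst.smul continuous_const)).add
      (continuous_snd.smul continuous_const)
  have contQs : Continuous (Function.uncurry fun s t : ℝ =>
      ∑ k, Dform B k (a + s • (b - a) + t • (c - b)) (b - a) * (c - b) k) :=
    continuous_finset_sum _ fun k _ =>
      ((continuous_Dapp B hB k (b - a)).comp contT).mul continuous_const
  have contPt : Continuous (Function.uncurry fun s t : ℝ =>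
      ∑ k, Dform B k (a + s • (b - a) + t • (c - b)) (c - b) * (b - a) k) :=
    continuous_finset_sum _ fun k _ =>
      ((continuous_Dapp B hB k (c - b)).comp contT).mul continuous_const
  have contDiag : ∀ w : Fin N → ℝ,
      Continuous fun t : ℝ => ∑ k, Aform B k (a + t • (b - a) + t • (c - b)) * w k :=
    fun w => continuous_finset_sum _ fun k _ =>
      ((continuous_Aform B hB k).comp
        ((continuous_const.add (continuous_id.smul continuous_const)).add
          (continuous_id.smul continuous_const))).mul continuous_const
  have contPS0 : Continuous fun s : ℝ =>
      ∑ k, Aform B k (a + s • (b - a) + (0:ℝ) • (c - b)) * (b - a) k :=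
    continuous_finset_sum _ fun k _ =>
      ((continuous_Aform B hB k).comp
        ((continuous_const.add (continuous_id.smul continuous_const)).add
          continuous_const)).mul continuous_const
  have contQ1 : Continuous fun t : ℝ =>
      ∑ k, Aform B k (a + (1:ℝ) • (b - a) + t • (c - b)) * (c - b) k :=
    continuous_finset_sum _ fun k _ =>
      ((continuous_Aform B hB k).comp
        (continuous_const.add (continuous_id.smul continuous_const))).mul continuous_const
  have contLine : ∀ p w w' : Fin N → ℝ,
      Continuous fun τ : ℝ => ∑ k, Aform B k (p + τ • w) * w' k :=
    fun p w w' => continuous_finset_sum _ fun k _ =>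
      ((continuous_Aform B hB k).comp
        (continuous_const.add (continuous_id.smul continuous_const))).mul continuous_const
  -- derivative facts
  have hlineS : ∀ t σ : ℝ,
      HasDerivAt (fun σ : ℝ => a + σ • (b - a) + t • (c - b)) (b - a) σ := by
    intro t σ
    have h : HasDerivAt (fun σ : ℝ => σ • (b - a)) (b - a) σ := by
      simpa using (hasDerivAt_id σ).smul_const (b - a)
    exact (h.const_add a).add_const (t • (c - b))
  have hlineT : ∀ s τ : ℝ,
      HasDerivAt (fun τ : ℝ => a + s • (b - a) + τ • (c - b)) (c - b) τ := by
    intro s τ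
    have h : HasDerivAt (fun τ : ℝ => τ • (c - b)) (c - b) τ := by
      simpa using (hasDerivAt_id τ).smul_const (c - b)
    exact h.const_add (a + s • (b - a))
  have hQs : ∀ s t : ℝ,
      HasDerivAt (fun σ => ∑ k, Aform B k (a + σ • (b - a) + t • (c - b)) * (c - b) k)
        (∑ k, Dform B k (a + s • (b - a) + t • (c - b)) (b - a) * (c - b) k) s :=
    fun s t => HasDerivAt.fun_sum fun k _ =>
      ((hasFDerivAt_Aform B hB k _).comp_hasDerivAt s (hlineS t s)).mul_const _
  have hPt : ∀ s t : ℝ,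
      HasDerivAt (fun τ => ∑ k, Aform B k (a + s • (b - a) + τ • (c - b)) * (b - a) k)
        (∑ k, Dform B k (a + s • (b - a) + t • (c - b)) (c - b) * (b - a) k) t :=
    fun s t => HasDerivAt.fun_sum fun k _ =>
      ((hasFDerivAt_Aform B hB k _).comp_hasDerivAt t (hlineT s t)).mul_const _
  -- pointwise curl identity
  have h0 : ∀ p : Fin N → ℝ, (∑ j, ∑ k, B j k p * (b - a) j * (c - b) k)
      = (∑ k, Dform B k p (b - a) * (c - b) k)
        - ∑ k, Dform B k p (c - b) * (b - a) k := by
    intro p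
    calc ∑ j, ∑ k, B j k p * (b - a) j * (c - b) k
        = ∑ j, ∑ k, ((b - a) j * Dform B k p (Pi.single j 1) * (c - b) k
            - (c - b) k * Dform B j p (Pi.single k 1) * (b - a) j) := by
          refine Finset.sum_congr rfl fun j _ => Finset.sum_congr rfl fun k _ => ?_
          rw [← curl B hB hBanti hBclosed j k p]; ring
      _ = (∑ j, ∑ k, (b - a) j * Dform B k p (Pi.single j 1) * (c - b) k)
            - ∑ j, ∑ k, (c - b) k * Dform B j p (Pi.single k 1) * (b - a) j := by
          rw [← Finset.sum_sub_distrib]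
          exact Finset.sum_congr rfl fun j _ => by rw [Finset.sum_sub_distrib]
      _ = (∑ k, Dform B k p (b - a) * (c - b) k)
            - ∑ k, Dform B k p (c - b) * (b - a) k := by
          congr 1
          · rw [Finset.sum_comm]
            refine Finset.sum_congr rfl fun k _ => ?_
            rw [clm_eval_eq_sum (Dform B k p) (b - a), Finset.sum_mul]
          · refine Finset.sum_congr rfl fun j _ => ?_
            rw [clm_eval_eq_sum (Dform B j p) (c - b), Finset.sum_mul]
  -- rewrite the flux integrand
  have step1 : fluxB B a b c
      = ∫ s in (0:ℝ)..1, ∫ t in (0:ℝ)..s,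
          ((∑ k, Dform B k (a + s • (b - a) + t • (c - b)) (b - a) * (c - b) k)
            - ∑ k, Dform B k (a + s • (b - a) + t • (c - b)) (c - b) * (b - a) k) := by
    unfold fluxB
    exact intervalIntegral.integral_congr fun s _ =>
      intervalIntegral.integral_congr fun t _ => h0 _
  have step2 : ∀ s : ℝ, (∫ t in (0:ℝ)..s,
          ((∑ k, Dform B k (a + s • (b - a) + t • (c - b)) (b - a) * (c - b) k)
            - ∑ k, Dform B k (a + s • (b - a) + t • (c - b)) (c - b) * (b - a) k))
      = (∫ t in (0:ℝ)..s,
          ∑ k, Dform B k (a + s • (b - a) + t • (c - b)) (b - a) * (c - b) k)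
        - ∫ t in (0:ℝ)..s,
            ∑ k, Dform B k (a + s • (b - a) + t • (c - b)) (c - b) * (b - a) k :=
    fun s => intervalIntegral.integral_sub
      ((contQs.comp (Continuous.prodMk_right s)).intervalIntegrable 0 s)
      ((contPt.comp (Continuous.prodMk_right s)).intervalIntegrable 0 s)
  have step3 : fluxB B a b c
      = (∫ s in (0:ℝ)..1, ∫ t in (0:ℝ)..s,
          ∑ k, Dform B k (a + s • (b - a) + t • (c - b)) (b - a) * (c - b) k)
        - ∫ s in (0:ℝ)..1, ∫ t in (0:ℝ)..s,
            ∑ k, Dform B k (a + s • (b - a) + t • (c - b)) (c - b) * (b - a) k := by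
    rw [step1, intervalIntegral.integral_congr fun s _ => step2 s]
    exact intervalIntegral.integral_sub
      ((intervalIntegral.continuous_parametric_intervalIntegral_of_continuous
        contQs continuous_id).intervalIntegrable 0 1)
      ((intervalIntegral.continuous_parametric_intervalIntegral_of_continuous
        contPt continuous_id).intervalIntegrable 0 1)
  -- the ∂ₜP part via FTC
  have stepP : (∫ s in (0:ℝ)..1, ∫ t in (0:ℝ)..s,
        ∑ k, Dform B k (a + s • (b - a) + t • (c - b)) (c - b) * (b - a) k)
      = (∫ s in (0:ℝ)..1, ∑ k, Aform B k (a + s • (b - a) + s • (c - b)) * (b - a) k)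
        - ∫ s in (0:ℝ)..1, ∑ k, Aform B k (a + s • (b - a) + (0:ℝ) • (c - b)) * (b - a) k := by
    rw [intervalIntegral.integral_congr (fun s _ =>
      intervalIntegral.integral_eq_sub_of_hasDerivAt (fun t _ => hPt s t)
        ((contPt.comp (Continuous.prodMk_right s)).intervalIntegrable 0 s))]
    exact intervalIntegral.integral_sub
      ((contDiag (b - a)).intervalIntegrable 0 1) (contPS0.intervalIntegrable 0 1)
  -- the ∂ₛQ part via Fubini swap and FTC
  have stepQ : (∫ s in (0:ℝ)..1, ∫ t in (0:ℝ)..s,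
        ∑ k, Dform B k (a + s • (b - a) + t • (c - b)) (b - a) * (c - b) k)
      = (∫ t in (0:ℝ)..1, ∑ k, Aform B k (a + (1:ℝ) • (b - a) + t • (c - b)) * (c - b) k)
        - ∫ t in (0:ℝ)..1, ∑ k, Aform B k (a + t • (b - a) + t • (c - b)) * (c - b) k := by
    rw [triangle_swap _ contQs]
    rw [intervalIntegral.integral_congr (fun t _ =>
      intervalIntegral.integral_eq_sub_of_hasDerivAt (fun σ _ => hQs σ t)
        ((contQs.comp (continuous_id.prodMk continuous_const)).intervalIntegrable t 1))]
    exact intervalIntegral.integral_sub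
      (contQ1.intervalIntegrable 0 1) ((contDiag (c - b)).intervalIntegrable 0 1)
  -- identify line integrals
  have idPS0 : (∫ s in (0:ℝ)..1, ∑ k, Aform B k (a + s • (b - a) + (0:ℝ) • (c - b)) * (b - a) k)
      = Lint B a b := by
    unfold Lint
    exact intervalIntegral.integral_congr fun s _ => by
      rw [show a + s • (b - a) + (0:ℝ) • (c - b) = a + s • (b - a) by
        rw [zero_smul, add_zero]]
  have idQ1 : (∫ t in (0:ℝ)..1, ∑ k, Aform B k (a + (1:ℝ) • (b - a) + t • (c - b)) * (c - b) k)
      = Lint B b c := by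
    unfold Lint
    exact intervalIntegral.integral_congr fun t _ => by
      rw [show a + (1:ℝ) • (b - a) + t • (c - b) = b + t • (c - b) by
        rw [one_smul]; abel]
  have idDiag : (∫ t in (0:ℝ)..1, ∑ k, Aform B k (a + t • (b - a) + t • (c - b)) * (c - b) k)
        + (∫ t in (0:ℝ)..1, ∑ k, Aform B k (a + t • (b - a) + t • (c - b)) * (b - a) k)
      = Lint B a c := by
    rw [← intervalIntegral.integral_add
      ((contDiag (c - b)).intervalIntegrable 0 1) ((contDiag (b - a)).intervalIntegrable 0 1)]
    unfold Lint
    refine intervalIntegral.integral_congr fun t _ => ?_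
    rw [← Finset.sum_add_distrib]
    have hv : a + t • (b - a) + t • (c - b) = a + t • (c - a) := by
      rw [add_assoc, ← smul_add]
      congr 2
      abel
    refine Finset.sum_congr rfl fun k _ => ?_
    rw [hv]
    have : (c - b) k + (b - a) k = (c - a) k := by simp
    rw [← this]
    ring
  rw [step3, stepP, stepQ, idPS0, idQ1]
  linarith [idDiag]

end stokes

end MagAux

set_option linter.unusedVariables false in
theorem omegaB_two_cocycle (N : ℕ)
    (B : Fin N → Fin N → (Fin N → ℝ) → ℝ)
    (hBsmooth : ∀ j k, ContDiff ℝ (⊤ : ℕ∞) (B j k))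
    (hBanti : ∀ j k q, B j k q = - B k j q)
    (hBclosed : ∀ j k l q,
      fderiv ℝ (B j k) q (Pi.single l 1) + fderiv ℝ (B k l) q (Pi.single j 1)
        + fderiv ℝ (B l j) q (Pi.single k 1) = 0)
    (ℏ : ℝ) (hℏ : ℏ ≠ 0) :
    ∀ q x y z : Fin N → ℝ,
      omegaB B ℏ q x y * omegaB B ℏ q (x + y) z
        = omegaB B ℏ (q + ℏ • x) y z * omegaB B ℏ q x (y + z) := by
  intro q x y z
  have hst := MagAux.stokes B hBsmooth hBanti hBclosed
  have key : fluxB B q (q + ℏ • x) (q + ℏ • x + ℏ • y)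
      + fluxB B q (q + ℏ • (x + y)) (q + ℏ • (x + y) + ℏ • z)
      = fluxB B (q + ℏ • x) (q + ℏ • x + ℏ • y) (q + ℏ • x + ℏ • y + ℏ • z)
        + fluxB B q (q + ℏ • x) (q + ℏ • x + ℏ • (y + z)) := by
    rw [show q + ℏ • (x + y) = q + ℏ • x + ℏ • y by rw [smul_add, add_assoc]]
    rw [show q + ℏ • x + ℏ • (y + z) = q + ℏ • x + ℏ • y + ℏ • z by
      rw [smul_add, ← add_assoc]]
    rw [hst q _ _, hst q _ _, hst _ _ _, hst q _ _]
    ring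
  unfold omegaB
  rw [← Complex.exp_add, ← Complex.exp_add]
  congr 1
  have keyC : ((fluxB B q (q + ℏ • x) (q + ℏ • x + ℏ • y) : ℝ) : ℂ)
      + ((fluxB B q (q + ℏ • (x + y)) (q + ℏ • (x + y) + ℏ • z) : ℝ) : ℂ)
      = ((fluxB B (q + ℏ • x) (q + ℏ • x + ℏ • y) (q + ℏ • x + ℏ • y + ℏ • z) : ℝ) : ℂ)
        + ((fluxB B q (q + ℏ • x) (q + ℏ • x + ℏ • (y + z)) : ℝ) : ℂ) := by
    exact_mod_cast key
  linear_combination (-(Complex.I / (ℏ : ℂ))) * keyC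
end

section
/- Von Neumann condition (L¹ version): if φ, ψ ∈ 𝒮(ℝ^N × ℝ^N) and the B_{jk} are bounded uniformly continuous, then ‖φ ◇^ℏ ψ − φ ◇⁰ ψ‖₁ → 0 as ℏ → 0, where ‖ρ‖₁ = ∫ sup_q |ρ(q;x)| dx, (φ ◇^ℏ ψ)(q;x) = ∫ φ(q−(ℏ/2)(x−y); y) ψ(q+(ℏ/2)y; x−y) e^{−iℏΩ_B(q,x,y;ℏ)} dy and (φ ◇⁰ ψ)(q;x) = ∫ φ(q;y) ψ(q;x−y) dy. -/
open scoped BigOperators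
open MeasureTheory

/-- `Ω_B(q,x,y;ℏ) = Σ_{j,k} y_j (x-y)_k ∫₀¹∫₀ᵗ B_{jk}(q+(s-1/2)ℏx+(t-s)ℏy) ds dt`. -/
noncomputable def OmegaB {N : ℕ} (B : Fin N → Fin N → (Fin N → ℝ) → ℝ)
    (q x y : Fin N → ℝ) (ℏ : ℝ) : ℝ :=
  ∑ j, ∑ k, y j * (x - y) k *
    ∫ t in (0:ℝ)..1, ∫ s in (0:ℝ)..t,
      B j k (q + ((s - 1/2) * ℏ) • x + ((t - s) * ℏ) • y)

/-- The magnetic twisted product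
`(φ ◇^ℏ ψ)(q;x) = ∫ φ(q-(ℏ/2)(x-y);y) ψ(q+(ℏ/2)y;x-y) e^{-iℏΩ_B(q,x,y;ℏ)} dy`. -/
noncomputable def diamondH {N : ℕ} (B : Fin N → Fin N → (Fin N → ℝ) → ℝ) (ℏ : ℝ)
    (φ ψ : ((Fin N → ℝ) × (Fin N → ℝ)) → ℂ)
    (z : (Fin N → ℝ) × (Fin N → ℝ)) : ℂ :=
  ∫ y : Fin N → ℝ,
    φ (z.1 - (ℏ/2) • (z.2 - y), y) * ψ (z.1 + (ℏ/2) • y, z.2 - y) *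
      Complex.exp (-(Complex.I) * (ℏ : ℂ) * (OmegaB B z.1 z.2 y ℏ : ℝ))

/-- `(φ ◇⁰ ψ)(q;x) = ∫ φ(q;y) ψ(q;x-y) dy`. -/
noncomputable def diamondZero {N : ℕ} (φ ψ : ((Fin N → ℝ) × (Fin N → ℝ)) → ℂ)
    (z : (Fin N → ℝ) × (Fin N → ℝ)) : ℂ :=
  ∫ y : Fin N → ℝ, φ (z.1, y) * ψ (z.1, z.2 - y)

/-- The norm `‖ρ‖₁ = ∫ sup_q ‖ρ(q;x)‖ dx` of `L¹(ℝ^N_x; BC(ℝ^N_q))`. -/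
noncomputable def normOneBC {N : ℕ} (ρ : ((Fin N → ℝ) × (Fin N → ℝ)) → ℂ) : ℝ :=
  ∫ x : Fin N → ℝ, ⨆ q : Fin N → ℝ, ‖ρ (q, x)‖

lemma schwartz_decay_bound {E : Type*} [NormedAddCommGroup E] [NormedSpace ℝ E]
    (f : SchwartzMap E ℂ) (K : ℕ) :
    ∃ C : ℝ, 0 ≤ C ∧ ∀ x, ‖f x‖ ≤ C / (1 + ‖x‖) ^ K := by
  refine ⟨2 ^ K * (Finset.Iic (K, 0)).sup (fun m => SchwartzMap.seminorm ℝ m.1 m.2) f,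
    mul_nonneg (by positivity) (apply_nonneg _ _), fun x => ?_⟩
  rw [le_div_iff₀ (by positivity), mul_comm]
  have h := SchwartzMap.one_add_le_sup_seminorm_apply (𝕜 := ℝ) (m := (K, 0))
    (k := K) (n := 0) le_rfl le_rfl f x
  rwa [norm_iteratedFDeriv_zero] at h

lemma schwartz_lipschitz {E : Type*} [NormedAddCommGroup E] [NormedSpace ℝ E]
    (f : SchwartzMap E ℂ) :
    ∃ L : ℝ, 0 ≤ L ∧ ∀ a b, ‖f a - f b‖ ≤ L * ‖a - b‖ := by
  obtain ⟨C, hCpos, hC⟩ := f.decay 0 1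
  have hC0 : 0 ≤ C := hCpos.le
  refine ⟨C, hC0, fun a b => ?_⟩
  have hd : ∀ x, ‖fderiv ℝ f x‖ ≤ C := by
    intro x
    have h1 := hC x
    rw [pow_zero, one_mul] at h1
    refine ContinuousLinearMap.opNorm_le_bound _ hC0 fun v => ?_
    have h2 : fderiv ℝ f x v = iteratedFDeriv ℝ 1 f x (fun _ => v) := by
      rw [iteratedFDeriv_one_apply]
    rw [h2]
    calc ‖iteratedFDeriv ℝ 1 f x fun _ => v‖
        ≤ ‖iteratedFDeriv ℝ 1 f x‖ * ∏ _i : Fin 1, ‖v‖ :=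
          ContinuousMultilinearMap.le_opNorm _ _
      _ = ‖iteratedFDeriv ℝ 1 f x‖ * ‖v‖ := by simp
      _ ≤ C * ‖v‖ := by gcongr
  exact Convex.norm_image_sub_le_of_norm_fderiv_le
    (fun x _ => f.differentiable.differentiableAt) (fun x _ => hd x) convex_univ
    (Set.mem_univ b) (Set.mem_univ a)

lemma omegaB_abs_le {N : ℕ} (B : Fin N → Fin N → (Fin N → ℝ) → ℝ)
    (M : Fin N → Fin N → ℝ) (hM : ∀ j k q', |B j k q'| ≤ M j k)
    (hM0 : ∀ j k, 0 ≤ M j k) (q x y : Fin N → ℝ) (ℏ : ℝ) :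
    |OmegaB B q x y ℏ| ≤ (∑ j, ∑ k, M j k) * (‖y‖ * ‖x - y‖) := by
  unfold OmegaB
  calc |∑ j, ∑ k, y j * (x - y) k * ∫ t in (0:ℝ)..1, ∫ s in (0:ℝ)..t,
          B j k (q + ((s - 1/2) * ℏ) • x + ((t - s) * ℏ) • y)|
      ≤ ∑ j, |∑ k, y j * (x - y) k * ∫ t in (0:ℝ)..1, ∫ s in (0:ℝ)..t,
          B j k (q + ((s - 1/2) * ℏ) • x + ((t - s) * ℏ) • y)| :=
        Finset.abs_sum_le_sum_abs _ _
    _ ≤ ∑ j, ∑ k, |y j * (x - y) k * ∫ t in (0:ℝ)..1, ∫ s in (0:ℝ)..t,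
          B j k (q + ((s - 1/2) * ℏ) • x + ((t - s) * ℏ) • y)| :=
        Finset.sum_le_sum fun j _ => Finset.abs_sum_le_sum_abs _ _
    _ ≤ ∑ j, ∑ k, M j k * (‖y‖ * ‖x - y‖) := by
        refine Finset.sum_le_sum fun j _ => Finset.sum_le_sum fun k _ => ?_
        have hI : |∫ t in (0:ℝ)..1, ∫ s in (0:ℝ)..t,
            B j k (q + ((s - 1/2) * ℏ) • x + ((t - s) * ℏ) • y)| ≤ M j k := by
          have houter := intervalIntegral.norm_integral_le_of_norm_le_const
            (C := M j k) (a := (0:ℝ)) (b := 1)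
            (f := fun t => ∫ s in (0:ℝ)..t,
              B j k (q + ((s - 1/2) * ℏ) • x + ((t - s) * ℏ) • y)) ?_
          · simpa using houter
          · intro t ht
            rw [Set.uIoc_of_le (by norm_num : (0:ℝ) ≤ 1)] at ht
            have hinner := intervalIntegral.norm_integral_le_of_norm_le_const
              (C := M j k) (a := (0:ℝ)) (b := t)
              (f := fun s => B j k (q + ((s - 1/2) * ℏ) • x + ((t - s) * ℏ) • y))
              (fun s _ => by rw [Real.norm_eq_abs]; exact hM j k _)
            rw [sub_zero] at hinner
            calc ‖∫ s in (0:ℝ)..t, B j k (q + ((s - 1/2) * ℏ) • x + ((t - s) * ℏ) • y)‖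
                ≤ M j k * |t| := hinner
              _ ≤ M j k * 1 := by
                  have : |t| ≤ 1 := by rw [abs_of_pos ht.1]; exact ht.2
                  exact mul_le_mul_of_nonneg_left this (hM0 j k)
              _ = M j k := mul_one _
        rw [abs_mul, abs_mul]
        have h1 : |y j| ≤ ‖y‖ := by
          simpa [Real.norm_eq_abs] using norm_le_pi_norm y j
        have h2 : |(x - y) k| ≤ ‖x - y‖ := by
          simpa [Real.norm_eq_abs] using norm_le_pi_norm (x - y) k
        calc |y j| * |(x - y) k| * |_| ≤ ‖y‖ * ‖x - y‖ * M j k := by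
              gcongr
          _ = M j k * (‖y‖ * ‖x - y‖) := by ring
    _ = (∑ j, ∑ k, M j k) * (‖y‖ * ‖x - y‖) := by rw [Finset.sum_mul]; congr 1; ext j; rw [Finset.sum_mul]

lemma omegaB_continuous {N : ℕ} (B : Fin N → Fin N → (Fin N → ℝ) → ℝ)
    (hBc : ∀ j k, Continuous (B j k)) (q x : Fin N → ℝ) (ℏ : ℝ) :
    Continuous fun y => OmegaB B q x y ℏ := by
  unfold OmegaB
  refine continuous_finset_sum _ fun j _ => continuous_finset_sum _ fun k _ => ?_
  refine Continuous.mul (by fun_prop) ?_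
  have hinner : Continuous fun p : (Fin N → ℝ) × ℝ =>
      ∫ s in (0:ℝ)..p.2, B j k (q + ((s - 1/2) * ℏ) • x + ((p.2 - s) * ℏ) • p.1) := by
    have := intervalIntegral.continuous_parametric_intervalIntegral_of_continuous
      (μ := volume) (a₀ := (0:ℝ))
      (f := fun (p : (Fin N → ℝ) × ℝ) s =>
        B j k (q + ((s - 1/2) * ℏ) • x + ((p.2 - s) * ℏ) • p.1))
      (s := fun p => p.2) ?_ continuous_snd
    · exact this
    · exact (hBc j k).comp (by fun_prop)
  exact intervalIntegral.continuous_parametric_intervalIntegral_of_continuous'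
    (μ := volume)
    (f := fun (y : Fin N → ℝ) t => ∫ s in (0:ℝ)..t,
      B j k (q + ((s - 1/2) * ℏ) • x + ((t - s) * ℏ) • y))
    (hinner.comp (by fun_prop : Continuous fun p : (Fin N → ℝ) × ℝ => (p.1, p.2))) 0 1
set_option maxHeartbeats 2000000 in
theorem vonNeumann_condition_L1 (N : ℕ)
    (B : Fin N → Fin N → (Fin N → ℝ) → ℝ)
    (hBbdd : ∀ j k, ∃ M : ℝ, ∀ q, |B j k q| ≤ M)
    (hBuc : ∀ j k, UniformContinuous (B j k))
    (φ ψ : SchwartzMap ((Fin N → ℝ) × (Fin N → ℝ)) ℂ) :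
    Filter.Tendsto
      (fun ℏ : ℝ =>
        normOneBC (fun z => diamondH B ℏ (⇑φ) (⇑ψ) z - diamondZero (⇑φ) (⇑ψ) z))
      (nhds 0) (nhds 0) := by
  obtain ⟨Cφ, hCφ0, hφd⟩ := schwartz_decay_bound φ (N + 1)
  obtain ⟨Cψ, hCψ0, hψd⟩ := schwartz_decay_bound ψ (N + 1)
  obtain ⟨Lφ, hLφ0, hφl⟩ := schwartz_lipschitz φ
  obtain ⟨Lψ, hLψ0, hψl⟩ := schwartz_lipschitz ψ
  set M : Fin N → Fin N → ℝ := fun j k => |(hBbdd j k).choose| with hMdef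
  have hM : ∀ j k q', |B j k q'| ≤ M j k := fun j k q' =>
    ((hBbdd j k).choose_spec q').trans (le_abs_self _)
  have hM0 : ∀ j k, 0 ≤ M j k := fun j k => abs_nonneg _
  set CM : ℝ := ∑ j, ∑ k, M j k with hCMdef
  have hCM0 : 0 ≤ CM := Finset.sum_nonneg fun j _ => Finset.sum_nonneg fun k _ => hM0 j k
  set Pφ : (Fin N → ℝ) → ℝ := fun y => Cφ / (1 + ‖y‖) ^ (N + 1) with hPφdef
  set Pψ : (Fin N → ℝ) → ℝ := fun y => Cψ / (1 + ‖y‖) ^ (N + 1) with hPψdef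
  have hPφ0 : ∀ y, 0 ≤ Pφ y := fun y => by rw [hPφdef]; positivity
  have hPψ0 : ∀ y, 0 ≤ Pψ y := fun y => by rw [hPψdef]; positivity
  have hPφc : Continuous Pφ := by
    rw [hPφdef]; exact continuous_const.div (by fun_prop) (fun y => by positivity)
  have hPψc : Continuous Pψ := by
    rw [hPψdef]; exact continuous_const.div (by fun_prop) (fun y => by positivity)
  have hPint : ∀ (C : ℝ), 0 ≤ C → Integrable (fun y : Fin N → ℝ => C / (1 + ‖y‖) ^ (N + 1)) := by
    intro C hC
    have heq : (fun y : Fin N → ℝ => C / (1 + ‖y‖) ^ (N + 1)) =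
        fun y => C * (1 + ‖y‖) ^ (-((N : ℝ) + 1)) := by
      funext y
      have h1 : (0:ℝ) < 1 + ‖y‖ := by positivity
      rw [Real.rpow_neg h1.le, div_eq_mul_inv]
      congr 1
      rw [← Real.rpow_natCast (1 + ‖y‖) (N + 1)]
      norm_num
    rw [heq]
    refine Integrable.const_mul ?_ C
    refine integrable_one_add_norm ?_
    rw [Module.finrank_fin_fun]
    exact lt_add_one _
  have hPφint : Integrable Pφ := by rw [hPφdef]; exact hPint Cφ hCφ0
  have hPψint : Integrable Pψ := by rw [hPψdef]; exact hPint Cψ hCψ0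
  have hPφle : ∀ p : (Fin N → ℝ) × (Fin N → ℝ), ‖φ p‖ ≤ Pφ p.2 := by
    intro p
    refine (hφd p).trans ?_
    simp only [hPφdef]
    gcongr Cφ / (1 + ?_) ^ (N + 1)
    exact norm_snd_le p
  have hPψle : ∀ p : (Fin N → ℝ) × (Fin N → ℝ), ‖ψ p‖ ≤ Pψ p.2 := by
    intro p
    refine (hψd p).trans ?_
    simp only [hPψdef]
    gcongr Cψ / (1 + ?_) ^ (N + 1)
    exact norm_snd_le p
  have hPψbd : ∀ u, Pψ u ≤ Cψ := by
    intro u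
    simp only [hPψdef]
    refine div_le_self hCψ0 ?_
    exact one_le_pow₀ (by linarith [norm_nonneg u])
  -- the modulus of the exponential is 1
  have hnorme : ∀ (h Ω : ℝ), ‖Complex.exp (-(Complex.I) * (h:ℂ) * (Ω:ℝ))‖ = 1 := by
    intro h Ω
    rw [show -(Complex.I) * (h:ℂ) * ((Ω:ℝ):ℂ) = ((-(h*Ω) : ℝ) : ℂ) * Complex.I by
      push_cast; ring]
    exact Complex.norm_exp_ofReal_mul_I _
  have heminus : ∀ (h Ω : ℝ),
      ‖Complex.exp (-(Complex.I) * (h:ℂ) * (Ω:ℝ)) - 1‖ ≤ min 2 (2 * (|h| * |Ω|)) := by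
    intro h Ω
    have habsz : ‖(-(Complex.I) * (h:ℂ) * (Ω:ℝ))‖ = |h| * |Ω| := by
      simp [Complex.norm_real]
    have h2 : ‖Complex.exp (-(Complex.I) * (h:ℂ) * (Ω:ℝ)) - 1‖ ≤ 2 := by
      calc ‖Complex.exp (-(Complex.I) * (h:ℂ) * (Ω:ℝ)) - 1‖
          ≤ ‖Complex.exp (-(Complex.I) * (h:ℂ) * (Ω:ℝ))‖ + ‖(1:ℂ)‖ := norm_sub_le _ _
        _ = 2 := by rw [hnorme, norm_one]; norm_num
    refine le_min h2 ?_
    by_cases hc : ‖(-(Complex.I) * (h:ℂ) * (Ω:ℝ))‖ ≤ 1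
    · have := Complex.norm_exp_sub_one_le hc
      rw [habsz] at this
      exact this
    · push_neg at hc
      rw [habsz] at hc
      linarith
  -- the dominating family
  set H : ℝ → (Fin N → ℝ) → (Fin N → ℝ) → ℝ := fun h x y =>
    min (2 * Pφ y) (Lφ * (|h| / 2 * ‖x - y‖)) * Pψ (x - y)
      + Pφ y * min (2 * Pψ (x - y)) (Lψ * (|h| / 2 * ‖y‖))
      + Pφ y * Pψ (x - y) * min 2 (2 * (|h| * (CM * (‖y‖ * ‖x - y‖)))) with hHdef
  have hH0 : ∀ h x y, 0 ≤ H h x y := by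
    intro h x y
    simp only [hHdef]
    have h1 : 0 ≤ min (2 * Pφ y) (Lφ * (|h| / 2 * ‖x - y‖)) :=
      le_min (by positivity) (by positivity)
    have h2 : 0 ≤ min (2 * Pψ (x - y)) (Lψ * (|h| / 2 * ‖y‖)) :=
      le_min (by positivity) (by positivity)
    have h3 : (0:ℝ) ≤ min 2 (2 * (|h| * (CM * (‖y‖ * ‖x - y‖)))) :=
      le_min (by norm_num) (by positivity)
    have := hPφ0 y; have := hPψ0 (x - y)
    positivity
  -- key pointwise estimate
  have hpt : ∀ (h : ℝ) (q x y : Fin N → ℝ),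
      ‖φ (q - (h/2) • (x - y), y) * ψ (q + (h/2) • y, x - y) *
          Complex.exp (-(Complex.I) * (h:ℂ) * (OmegaB B q x y h : ℝ)) -
        φ (q, y) * ψ (q, x - y)‖ ≤ H h x y := by
    intro h q x y
    set a := φ (q - (h/2) • (x - y), y) with hadef
    set c := φ (q, y) with hcdef
    set b := ψ (q + (h/2) • y, x - y) with hbdef
    set d := ψ (q, x - y) with hddef
    set Ω := OmegaB B q x y h with hΩdef
    set e := Complex.exp (-(Complex.I) * (h:ℂ) * (Ω:ℝ)) with hedef
    have hkey : a * b * e - c * d = (a - c) * b * e + (c * (b - d) * e + c * d * (e - 1)) := by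
      ring
    rw [hkey]
    have hΩle : |Ω| ≤ CM * (‖y‖ * ‖x - y‖) := by
      rw [hΩdef, hCMdef]
      exact omegaB_abs_le B M hM hM0 q x y h
    have t1 : ‖(a - c) * b * e‖ ≤ min (2 * Pφ y) (Lφ * (|h| / 2 * ‖x - y‖)) * Pψ (x - y) := by
      rw [norm_mul, norm_mul, hedef, hnorme, mul_one]
      have hac : ‖a - c‖ ≤ min (2 * Pφ y) (Lφ * (|h| / 2 * ‖x - y‖)) := by
        refine le_min ?_ ?_
        · calc ‖a - c‖ ≤ ‖a‖ + ‖c‖ := norm_sub_le _ _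
            _ ≤ Pφ y + Pφ y := add_le_add (hPφle _) (hPφle _)
            _ = 2 * Pφ y := by ring
        · have harg : ((q - (h/2) • (x - y), y) : (Fin N → ℝ) × (Fin N → ℝ)) - (q, y)
              = (-((h/2) • (x - y)), (0 : Fin N → ℝ)) := by
            rw [Prod.mk_sub_mk, sub_sub_cancel_left, sub_self]
          calc ‖a - c‖ ≤ Lφ * ‖((q - (h/2) • (x - y), y) : (Fin N → ℝ) × (Fin N → ℝ)) - (q, y)‖ :=
                hφl _ _
            _ = Lφ * (|h| / 2 * ‖x - y‖) := by
                rw [harg, Prod.norm_def]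
                simp only [norm_neg, norm_zero, norm_smul, Real.norm_eq_abs]
                rw [max_eq_left (by positivity), abs_div]
                norm_num
      exact mul_le_mul hac (hPψle _) (norm_nonneg _)
        (le_min (by positivity) (by positivity))
    have t2 : ‖c * (b - d) * e‖ ≤ Pφ y * min (2 * Pψ (x - y)) (Lψ * (|h| / 2 * ‖y‖)) := by
      rw [norm_mul, norm_mul, hedef, hnorme, mul_one]
      have hbd : ‖b - d‖ ≤ min (2 * Pψ (x - y)) (Lψ * (|h| / 2 * ‖y‖)) := by
        refine le_min ?_ ?_
        · calc ‖b - d‖ ≤ ‖b‖ + ‖d‖ := norm_sub_le _ _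
            _ ≤ Pψ (x - y) + Pψ (x - y) := add_le_add (hPψle _) (hPψle _)
            _ = 2 * Pψ (x - y) := by ring
        · have harg : ((q + (h/2) • y, x - y) : (Fin N → ℝ) × (Fin N → ℝ)) - (q, x - y)
              = ((h/2) • y, (0 : Fin N → ℝ)) := by
            rw [Prod.mk_sub_mk, add_sub_cancel_left, sub_self]
          calc ‖b - d‖ ≤ Lψ * ‖((q + (h/2) • y, x - y) : (Fin N → ℝ) × (Fin N → ℝ)) - (q, x - y)‖ :=
                hψl _ _
            _ = Lψ * (|h| / 2 * ‖y‖) := by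
                rw [harg, Prod.norm_def]
                simp only [norm_zero, norm_smul, Real.norm_eq_abs]
                rw [max_eq_left (by positivity), abs_div]
                norm_num
      exact mul_le_mul (hPφle _) hbd (norm_nonneg _) (hPφ0 y)
    have t3 : ‖c * d * (e - 1)‖ ≤
        Pφ y * Pψ (x - y) * min 2 (2 * (|h| * (CM * (‖y‖ * ‖x - y‖)))) := by
      rw [norm_mul, norm_mul]
      have he1 : ‖e - 1‖ ≤ min 2 (2 * (|h| * (CM * (‖y‖ * ‖x - y‖)))) := by
        refine le_trans (hedef ▸ heminus h Ω) ?_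
        refine min_le_min le_rfl ?_
        have : |h| * |Ω| ≤ |h| * (CM * (‖y‖ * ‖x - y‖)) :=
          mul_le_mul_of_nonneg_left hΩle (abs_nonneg h)
        linarith
      refine mul_le_mul (mul_le_mul (hPφle _) (hPψle _) (norm_nonneg _) (hPφ0 y)) he1
        (norm_nonneg _) (mul_nonneg (hPφ0 y) (hPψ0 _))
    simp only [hHdef]
    calc ‖(a - c) * b * e + (c * (b - d) * e + c * d * (e - 1))‖
        ≤ ‖(a - c) * b * e‖ + (‖c * (b - d) * e‖ + ‖c * d * (e - 1)‖) :=
          (norm_add_le _ _).trans (by gcongr; exact norm_add_le _ _)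
      _ ≤ _ := by rw [← add_assoc]; exact add_le_add (add_le_add t1 t2) t3
  have hBc : ∀ j k, Continuous (B j k) := fun j k => (hBuc j k).continuous
  -- integrability of the two integrands
  have hIntA : ∀ (h : ℝ) (q x : Fin N → ℝ), Integrable (fun y : Fin N → ℝ =>
      φ (q - (h/2) • (x - y), y) * ψ (q + (h/2) • y, x - y) *
        Complex.exp (-(Complex.I) * (h:ℂ) * (OmegaB B q x y h : ℝ))) := by
    intro h q x
    refine Integrable.mono' (hPφint.const_mul Cψ) ?_ (ae_of_all _ fun y => ?_)
    · apply Continuous.aestronglyMeasurable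
      refine Continuous.mul (Continuous.mul ?_ ?_) ?_
      · exact φ.continuous.comp (by fun_prop)
      · exact ψ.continuous.comp (by fun_prop)
      · refine Complex.continuous_exp.comp ?_
        exact continuous_const.mul
          (Complex.continuous_ofReal.comp (omegaB_continuous B hBc q x h))
    · rw [norm_mul, norm_mul, hnorme, mul_one]
      calc ‖φ (q - (h/2) • (x - y), y)‖ * ‖ψ (q + (h/2) • y, x - y)‖
          ≤ Pφ y * Pψ (x - y) :=
            mul_le_mul (hPφle _) (hPψle _) (norm_nonneg _) (hPφ0 y)
        _ ≤ Pφ y * Cψ := mul_le_mul_of_nonneg_left (hPψbd _) (hPφ0 y)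
        _ = Cψ * Pφ y := mul_comm _ _
  have hIntB : ∀ (q x : Fin N → ℝ),
      Integrable (fun y : Fin N → ℝ => φ (q, y) * ψ (q, x - y)) := by
    intro q x
    refine Integrable.mono' (hPφint.const_mul Cψ) ?_ (ae_of_all _ fun y => ?_)
    · apply Continuous.aestronglyMeasurable
      exact (φ.continuous.comp (by fun_prop)).mul (ψ.continuous.comp (by fun_prop))
    · rw [norm_mul]
      calc ‖φ (q, y)‖ * ‖ψ (q, x - y)‖
          ≤ Pφ y * Pψ (x - y) :=
            mul_le_mul (hPφle _) (hPψle _) (norm_nonneg _) (hPφ0 y)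
        _ ≤ Pφ y * Cψ := mul_le_mul_of_nonneg_left (hPψbd _) (hPφ0 y)
        _ = Cψ * Pφ y := mul_comm _ _
  -- continuity of H
  have hHc2 : ∀ h : ℝ, Continuous fun z : (Fin N → ℝ) × (Fin N → ℝ) => H h z.1 z.2 := by
    intro h
    simp only [hHdef]
    have c1 : Continuous fun z : (Fin N → ℝ) × (Fin N → ℝ) => Pφ z.2 :=
      hPφc.comp continuous_snd
    have c2 : Continuous fun z : (Fin N → ℝ) × (Fin N → ℝ) => Pψ (z.1 - z.2) :=
      hPψc.comp (continuous_fst.sub continuous_snd)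
    have c3 : Continuous fun z : (Fin N → ℝ) × (Fin N → ℝ) => ‖z.1 - z.2‖ :=
      (continuous_fst.sub continuous_snd).norm
    have c4 : Continuous fun z : (Fin N → ℝ) × (Fin N → ℝ) => ‖z.2‖ := continuous_snd.norm
    refine Continuous.add (Continuous.add ?_ ?_) ?_
    · exact ((continuous_const.mul c1).min
        (continuous_const.mul (continuous_const.mul c3))).mul c2
    · exact c1.mul ((continuous_const.mul c2).min
        (continuous_const.mul (continuous_const.mul c4)))
    · exact (c1.mul c2).mul (continuous_const.min
        (continuous_const.mul (continuous_const.mul (continuous_const.mul (c4.mul c3)))))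
  have hHch : ∀ (x y : Fin N → ℝ), Continuous fun h : ℝ => H h x y := by
    intro x y
    simp only [hHdef]
    have cabs : Continuous fun h : ℝ => |h| := continuous_abs
    refine Continuous.add (Continuous.add ?_ ?_) ?_
    · exact (continuous_const.min
        (continuous_const.mul ((cabs.div_const 2).mul continuous_const))).mul continuous_const
    · exact continuous_const.mul (continuous_const.min
        (continuous_const.mul ((cabs.div_const 2).mul continuous_const)))
    · exact continuous_const.mul (continuous_const.min
        (continuous_const.mul (cabs.mul continuous_const)))
  have hH0val : ∀ (x y : Fin N → ℝ), H 0 x y = 0 := by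
    intro x y
    simp only [hHdef, abs_zero, zero_div, zero_mul, mul_zero]
    rw [min_eq_right (mul_nonneg (by norm_num) (hPφ0 y)),
      min_eq_right (mul_nonneg (by norm_num) (hPψ0 (x - y))),
      min_eq_right (by norm_num : (0:ℝ) ≤ 2)]
    ring
  have hHleG : ∀ (h : ℝ) (x y : Fin N → ℝ), H h x y ≤ 6 * (Pφ y * Pψ (x - y)) := by
    intro h x y
    simp only [hHdef]
    calc min (2 * Pφ y) (Lφ * (|h| / 2 * ‖x - y‖)) * Pψ (x - y)
          + Pφ y * min (2 * Pψ (x - y)) (Lψ * (|h| / 2 * ‖y‖))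
          + Pφ y * Pψ (x - y) * min 2 (2 * (|h| * (CM * (‖y‖ * ‖x - y‖))))
        ≤ 2 * Pφ y * Pψ (x - y) + Pφ y * (2 * Pψ (x - y)) + Pφ y * Pψ (x - y) * 2 := by
          refine add_le_add (add_le_add ?_ ?_) ?_
          · exact mul_le_mul_of_nonneg_right (min_le_left _ _) (hPψ0 _)
          · exact mul_le_mul_of_nonneg_left (min_le_left _ _) (hPφ0 y)
          · exact mul_le_mul_of_nonneg_left (min_le_left _ _)
              (mul_nonneg (hPφ0 y) (hPψ0 _))
      _ = 6 * (Pφ y * Pψ (x - y)) := by ring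
  -- integrability of the dominating function on the product space
  have hGint : Integrable
      (fun z : (Fin N → ℝ) × (Fin N → ℝ) => Pφ z.2 * Pψ (z.1 - z.2)) volume := by
    have h1 : Integrable (fun z : (Fin N → ℝ) × (Fin N → ℝ) => Pψ z.1 * Pφ z.2)
        ((volume : Measure (Fin N → ℝ)).prod volume) := hPψint.mul_prod hPφint
    have hT : MeasurePreserving
        (fun p : (Fin N → ℝ) × (Fin N → ℝ) => (p.1 - p.2, p.2))
        ((volume : Measure (Fin N → ℝ)).prod volume)
        ((volume : Measure (Fin N → ℝ)).prod volume) :=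
      measurePreserving_sub_prod volume volume
    have h2 := (hT.integrable_comp h1.aestronglyMeasurable).mpr h1
    rw [MeasureTheory.Measure.volume_eq_prod]
    have heq : (fun z : (Fin N → ℝ) × (Fin N → ℝ) => Pφ z.2 * Pψ (z.1 - z.2)) =
        ((fun z : (Fin N → ℝ) × (Fin N → ℝ) => Pψ z.1 * Pφ z.2) ∘
          fun p : (Fin N → ℝ) × (Fin N → ℝ) => (p.1 - p.2, p.2)) := by
      funext z
      exact mul_comm _ _
    rw [heq]
    exact h2
  have hHprodInt : ∀ h : ℝ, Integrable
      (fun z : (Fin N → ℝ) × (Fin N → ℝ) => H h z.1 z.2) volume := by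
    intro h
    refine (hGint.const_mul 6).mono' (hHc2 h).aestronglyMeasurable (ae_of_all _ fun z => ?_)
    rw [Real.norm_eq_abs, abs_of_nonneg (hH0 h z.1 z.2)]
    exact hHleG h z.1 z.2
  -- the dominated convergence argument
  have hJ : Filter.Tendsto
      (fun h : ℝ => ∫ z : (Fin N → ℝ) × (Fin N → ℝ), H h z.1 z.2) (nhds 0) (nhds 0) := by
    have h0 := MeasureTheory.tendsto_integral_filter_of_dominated_convergence
      (μ := (volume : Measure ((Fin N → ℝ) × (Fin N → ℝ))))
      (F := fun (h : ℝ) (z : (Fin N → ℝ) × (Fin N → ℝ)) => H h z.1 z.2)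
      (f := fun _ => (0:ℝ)) (l := nhds (0:ℝ))
      (bound := fun z => 6 * (Pφ z.2 * Pψ (z.1 - z.2)))
      (Filter.Eventually.of_forall fun h => (hHc2 h).aestronglyMeasurable)
      (Filter.Eventually.of_forall fun h => ae_of_all _ fun z => by
        rw [Real.norm_eq_abs, abs_of_nonneg (hH0 h z.1 z.2)]
        exact hHleG h z.1 z.2)
      (hGint.const_mul 6)
      (ae_of_all _ fun z => by
        have := (hHch z.1 z.2).tendsto 0
        rwa [hH0val z.1 z.2] at this)
    simpa using h0
  -- squeeze
  refine squeeze_zero (fun h => ?_) (fun h => ?_) hJ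
  · exact integral_nonneg fun x => Real.iSup_nonneg fun q => norm_nonneg _
  · -- normOneBC ≤ ∫∫ H
    have hHyInt : ∀ (h : ℝ) (x : Fin N → ℝ), Integrable (fun y => H h x y) := by
      intro h x
      refine (hPφint.const_mul (6 * Cψ)).mono'
        (((hHc2 h).comp (Continuous.prodMk_right x)).aestronglyMeasurable)
        (ae_of_all _ fun y => ?_)
      rw [Real.norm_eq_abs, abs_of_nonneg (hH0 h x y)]
      calc H h x y ≤ 6 * (Pφ y * Pψ (x - y)) := hHleG h x y
        _ ≤ 6 * (Pφ y * Cψ) := by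
            exact mul_le_mul_of_nonneg_left
              (mul_le_mul_of_nonneg_left (hPψbd _) (hPφ0 y)) (by norm_num)
        _ = 6 * Cψ * Pφ y := by ring
    have step1 : ∀ x : Fin N → ℝ,
        (⨆ q : Fin N → ℝ, ‖diamondH B h (⇑φ) (⇑ψ) (q, x) - diamondZero (⇑φ) (⇑ψ) (q, x)‖)
          ≤ ∫ y, H h x y := by
      intro x
      refine Real.iSup_le (fun q => ?_) (integral_nonneg fun y => hH0 h x y)
      have hsub : diamondH B h (⇑φ) (⇑ψ) (q, x) - diamondZero (⇑φ) (⇑ψ) (q, x) =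
          ∫ y, (φ (q - (h/2) • (x - y), y) * ψ (q + (h/2) • y, x - y) *
            Complex.exp (-(Complex.I) * (h:ℂ) * (OmegaB B q x y h : ℝ)) -
              φ (q, y) * ψ (q, x - y)) := by
        rw [diamondH, diamondZero]
        exact (integral_sub (hIntA h q x) (hIntB q x)).symm
      rw [hsub]
      refine (norm_integral_le_integral_norm _).trans ?_
      exact integral_mono_of_nonneg (ae_of_all _ fun y => norm_nonneg _) (hHyInt h x)
        (ae_of_all _ fun y => hpt h q x y)
    have hInner : Integrable (fun x : Fin N → ℝ => ∫ y, H h x y) := by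
      have h1 : Integrable (fun z : (Fin N → ℝ) × (Fin N → ℝ) => H h z.1 z.2)
          ((volume : Measure (Fin N → ℝ)).prod volume) := by
        rw [← MeasureTheory.Measure.volume_eq_prod]
        exact hHprodInt h
      exact h1.integral_prod_left
    have hfub : ∫ x : Fin N → ℝ, ∫ y : Fin N → ℝ, H h x y =
        ∫ z : (Fin N → ℝ) × (Fin N → ℝ), H h z.1 z.2 := by
      have h1 : Integrable (Function.uncurry (H h))
          ((volume : Measure (Fin N → ℝ)).prod volume) := by
        rw [← MeasureTheory.Measure.volume_eq_prod]
        exact hHprodInt h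
      rw [MeasureTheory.integral_integral h1, ← MeasureTheory.Measure.volume_eq_prod]
    calc normOneBC (fun z => diamondH B h (⇑φ) (⇑ψ) z - diamondZero (⇑φ) (⇑ψ) z)
        ≤ ∫ x : Fin N → ℝ, ∫ y : Fin N → ℝ, H h x y := by
          rw [normOneBC]
          exact integral_mono_of_nonneg
            (ae_of_all _ fun x => Real.iSup_nonneg fun q => norm_nonneg _)
            hInner (ae_of_all _ fun x => step1 x)
      _ = ∫ z : (Fin N → ℝ) × (Fin N → ℝ), H h z.1 z.2 := hfub
end
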